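/- arXiv:2303.08575 — 5 statements merged into one kernel-verified Lean document; each statement's English description precedes it below -/
import Mathlib

section
/- Consider the matrix recursion P_{k+1} = A_k P_k A_kᵀ + Q_k with symmetric initial value P_0, where A_k ∈ ℝ^{n×n} and symmetric Q_k ∈ ℝ^{n×n} satisfy ‖A_k − Ā_k‖₂ → 0 and ‖Q_k − Q̄_k‖₂ → 0 as k → ∞, with Ā_· and Q̄_· 𝒯-periodic sequences, Q̄_k symmetric, and the monodromy matrix Ā_{k+𝒯−1}···Ā_k Schur stable (spectral radius < 1). Let P̄_· be a 𝒯-periodic sequence of symmetric matrices satisfying the discrete-time periodic Lyapunov equation P̄_{k+1} = Ā_k P̄_k Ā_kᵀ + Q̄_k for all k. Then lim_{k→∞} (P_k − P̄_k) = 0. -/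
/-! The error `E = P - Pbar` satisfies the Lyapunov recursion
`E (k + 1) = A k * E k * (A k)ᵀ + d k` with an input `d → 0`. Schur stability of the
monodromies makes `phiProd Abar k N` a uniform contraction for a suitable multiple `N` of `T`;
since `A - Abar → 0`, the `N`-step transition matrices of `A` converge to those of `Abar` and
eventually contract as well. Hence `‖E (k + N)‖ ≤ σ ^ 2 * ‖E k‖ + r k` with `σ < 1` and
`r → 0`, which forces `E → 0`. -/

open Matrix Filter

/-- A real square matrix is Schur stable if every complex eigenvalue has modulus `< 1`. -/
def SchurStable {n : ℕ} (A : Matrix (Fin n) (Fin n) ℝ) : Prop :=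
  ∀ μ ∈ spectrum ℂ (A.map (algebraMap ℝ ℂ)), ‖μ‖ < 1

/-- `phiProd F k h = F (k+h-1) * ⋯ * F (k+1) * F k`. -/
def phiProd {n : ℕ} (F : ℕ → Matrix (Fin n) (Fin n) ℝ) (k : ℕ) :
    ℕ → Matrix (Fin n) (Fin n) ℝ
  | 0 => 1
  | h + 1 => F (k + h) * phiProd F k h

open scoped Matrix.Norms.L2Operator

open Topology

theorem tendsto_of_forall_tendsto_add_mul {α : Type*} {f : ℕ → α} {l : Filter α} {N : ℕ}
    (hN : 0 < N) (h : ∀ i < N, Tendsto (fun j => f (i + j * N)) atTop l) :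
    Tendsto f atTop l := by
  rw [tendsto_def]
  intro U hU
  have hres : ∀ᶠ j in atTop, ∀ i ∈ Finset.range N, f (i + j * N) ∈ U :=
    (eventually_all_finset _).2 fun i hi => h i (Finset.mem_range.1 hi) hU
  filter_upwards [(Nat.tendsto_div_const_atTop hN.ne').eventually hres] with m hm
  have hm' := hm (m % N) (Finset.mem_range.2 (Nat.mod_lt m hN))
  rwa [Nat.mod_add_div'] at hm'

theorem tendsto_zero_of_eventually_succ_le_mul_add {a r : ℕ → ℝ} {s : ℝ} (ha : ∀ k, 0 ≤ a k)
    (hs₀ : 0 ≤ s) (hs₁ : s < 1) (hr : Tendsto r atTop (𝓝 0))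
    (h : ∀ᶠ j in atTop, a (j + 1) ≤ s * a j + r j) : Tendsto a atTop (𝓝 0) := by
  refine tendsto_order.2 ⟨fun c hc => .of_forall fun j => hc.trans_le (ha j), fun c hc => ?_⟩
  obtain ⟨J, hJ⟩ := eventually_atTop.1
    (h.and (hr.eventually (ge_mem_nhds (by positivity : 0 < (1 - s) * (c / 2)))))
  -- `c / 2` is the fixed point of `x ↦ s * x + (1 - s) * (c / 2)`
  have hbound : ∀ i, a (J + i) ≤ c / 2 + s ^ i * a J := by
    intro i
    induction i with
    | zero => simpa using (half_pos hc).le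
    | succ i ih =>
      obtain ⟨hrec, hrj⟩ := hJ (J + i) (by omega)
      calc a (J + (i + 1)) ≤ s * a (J + i) + r (J + i) := hrec
        _ ≤ s * (c / 2 + s ^ i * a J) + (1 - s) * (c / 2) := by gcongr
        _ = c / 2 + s ^ (i + 1) * a J := by ring
  obtain ⟨I, hI⟩ := eventually_atTop.1 <|
    ((tendsto_pow_atTop_nhds_zero_of_lt_one hs₀ hs₁).mul_const (a J)).eventually
      (gt_mem_nhds (by rw [zero_mul]; exact half_pos hc))
  refine eventually_atTop.2 ⟨J + I, fun j hj => ?_⟩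
  obtain ⟨i, rfl⟩ := Nat.exists_eq_add_of_le (le_trans (Nat.le_add_right J I) hj)
  linarith [hbound i, hI i (by omega)]

theorem tendsto_zero_of_eventually_add_le_mul_add {a r : ℕ → ℝ} {s : ℝ} {N : ℕ} (hN : 0 < N)
    (ha : ∀ k, 0 ≤ a k) (hs₀ : 0 ≤ s) (hs₁ : s < 1) (hr : Tendsto r atTop (𝓝 0))
    (h : ∀ᶠ k in atTop, a (k + N) ≤ s * a k + r k) :
    Tendsto a atTop (𝓝 0) := by
  refine tendsto_of_forall_tendsto_add_mul hN fun i _ => ?_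
  have hi : Tendsto (fun j => i + j * N) atTop atTop :=
    tendsto_atTop_mono (fun j => le_add_left (Nat.le_mul_of_pos_right j hN)) tendsto_id
  refine tendsto_zero_of_eventually_succ_le_mul_add (fun j => ha _) hs₀ hs₁ (hr.comp hi) ?_
  filter_upwards [hi.eventually h] with j hj
  simpa only [Function.comp_apply, add_mul, one_mul, add_assoc] using hj

theorem Function.Periodic.exists_forall_le {β : Type*} [LinearOrder β] {f : ℕ → β} {T : ℕ}
    (hf : Function.Periodic f T) (hT : 0 < T) : ∃ j, ∀ k, f k ≤ f j := by
  obtain ⟨j, -, hj⟩ := (Finset.range T).exists_max_image f ⟨0, Finset.mem_range.2 hT⟩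
  exact ⟨j, fun k => hf.map_mod_nat k ▸ hj _ (Finset.mem_range.2 (Nat.mod_lt k hT))⟩

theorem Function.Periodic.isBoundedUnder_norm {E : Type*} [SeminormedAddGroup E] {f : ℕ → E}
    {T : ℕ} (hf : Function.Periodic f T) (hT : 0 < T) :
    IsBoundedUnder (· ≤ ·) atTop ((‖·‖) ∘ f) :=
  let ⟨_, hj⟩ := (hf.comp _).exists_forall_le hT
  isBoundedUnder_of ⟨_, hj⟩

theorem isBoundedUnder_norm_of_tendsto_sub {ι E : Type*} [SeminormedAddGroup E] {l : Filter ι}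
    {f g : ι → E} (hg : IsBoundedUnder (· ≤ ·) l ((‖·‖) ∘ g))
    (hfg : Tendsto (fun i => f i - g i) l (𝓝 0)) : IsBoundedUnder (· ≤ ·) l ((‖·‖) ∘ f) :=
  (isBoundedUnder_le_add hg hfg.norm.isBoundedUnder_le).mono_le
    (.of_forall fun i => norm_le_norm_add_norm_sub' (f i) (g i))

theorem Matrix.l2_opNorm_transpose {l m : Type*} [Fintype l] [Fintype m] [DecidableEq l]
    [DecidableEq m] (X : Matrix m l ℝ) : ‖Xᵀ‖ = ‖X‖ := by
  rw [← conjTranspose_eq_transpose_of_trivial, l2_opNorm_conjTranspose]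

variable {n : ℕ}

section phiProd

variable {F G : ℕ → Matrix (Fin n) (Fin n) ℝ}

theorem phiProd_add (k a b : ℕ) :
    phiProd F k (a + b) = phiProd F (k + a) b * phiProd F k a := by
  induction b with
  | zero => simp [phiProd]
  | succ b ih => rw [← add_assoc, phiProd, ih, phiProd, mul_assoc, add_assoc]

theorem periodic_phiProd {T : ℕ} (hF : Function.Periodic F T) (h : ℕ) :
    Function.Periodic (fun k => phiProd F k h) T := by
  intro k
  induction h with
  | zero => rfl
  | succ h ih => simp only [phiProd] at ih ⊢; rw [ih, add_right_comm, hF]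

theorem phiProd_mul_of_periodic {T : ℕ} (hF : Function.Periodic F T) (k m : ℕ) :
    phiProd F k (m * T) = phiProd F k T ^ m := by
  induction m with
  | zero => simp [phiProd]
  | succ m ih =>
    have hshift : phiProd F (k + m * T) T = phiProd F k T := by
      simpa using (periodic_phiProd hF T).nat_mul m k
    rw [add_one_mul, phiProd_add, hshift, ih, pow_succ']

theorem isBoundedUnder_norm_phiProd (hF : IsBoundedUnder (· ≤ ·) atTop ((‖·‖) ∘ F)) (h : ℕ) :
    IsBoundedUnder (· ≤ ·) atTop ((‖·‖) ∘ fun k => phiProd F k h) := by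
  induction h with
  | zero => exact isBoundedUnder_of ⟨‖(1 : Matrix (Fin n) (Fin n) ℝ)‖, fun _ => le_rfl⟩
  | succ h ih =>
    have hFh : IsBoundedUnder (· ≤ ·) atTop ((‖·‖) ∘ fun k => F (k + h)) :=
      (tendsto_add_atTop_nat h).isBoundedUnder_comp hF
    exact (isBoundedUnder_le_mul_of_nonneg (.of_forall fun _ => norm_nonneg _) hFh
      (.of_forall fun _ => norm_nonneg _) ih).mono_le (.of_forall fun k => norm_mul_le _ _)

theorem tendsto_phiProd_sub_phiProd (hG : IsBoundedUnder (· ≤ ·) atTop ((‖·‖) ∘ G))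
    (hFG : Tendsto (fun k => F k - G k) atTop (𝓝 0)) (h : ℕ) :
    Tendsto (fun k => phiProd F k h - phiProd G k h) atTop (𝓝 0) := by
  induction h with
  | zero => simp [phiProd]
  | succ h ih =>
    have hGh : IsBoundedUnder (· ≤ ·) atTop ((‖·‖) ∘ fun k => G (k + h)) :=
      (tendsto_add_atTop_nat h).isBoundedUnder_comp hG
    have hFGh : Tendsto (fun k => F (k + h) - G (k + h)) atTop (𝓝 0) :=
      hFG.comp (tendsto_add_atTop_nat h)
    have hexpand : ∀ k, phiProd F k (h + 1) - phiProd G k (h + 1) =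
        G (k + h) * (phiProd F k h - phiProd G k h) + (F (k + h) - G (k + h)) * phiProd G k h +
          (F (k + h) - G (k + h)) * (phiProd F k h - phiProd G k h) := by
      intro k
      simp only [phiProd]
      noncomm_ring
    simp only [hexpand]
    simpa using ((isBoundedUnder_le_mul_tendsto_zero hGh ih).add
      (hFGh.zero_mul_isBoundedUnder_le (isBoundedUnder_norm_phiProd hG h))).add (hFGh.mul ih)

end phiProd

theorem spectrum.tendsto_pow_atTop_nhds_zero {A : Type*} [NormedRing A] [NormedAlgebra ℂ A]
    [CompleteSpace A] {a : A} (ha : spectralRadius ℂ a < 1) :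
    Tendsto (a ^ ·) atTop (𝓝 0) := by
  obtain ⟨r, hρr, hr⟩ := ENNReal.lt_iff_exists_nnreal_btwn.1 ha
  have hr1 : r < 1 := by exact_mod_cast hr
  have hle : ∀ᶠ m : ℕ in atTop, ‖a ^ m‖ ≤ (r : ℝ) ^ m := by
    filter_upwards [(spectrum.pow_nnnorm_pow_one_div_tendsto_nhds_spectralRadius a).eventually
      (gt_mem_nhds hρr), eventually_gt_atTop 0] with m hm hm0
    have := ENNReal.rpow_lt_rpow hm (by positivity : (0 : ℝ) < m)
    rw [← ENNReal.rpow_mul, one_div_mul_cancel (by positivity), ENNReal.rpow_one,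
      ENNReal.rpow_natCast] at this
    exact_mod_cast this.le
  exact squeeze_zero_norm' hle (tendsto_pow_atTop_nhds_zero_of_lt_one r.2 hr1)

theorem SchurStable.tendsto_pow_atTop_nhds_zero {Φ : Matrix (Fin n) (Fin n) ℝ}
    (hΦ : SchurStable Φ) : Tendsto (Φ ^ ·) atTop (𝓝 0) := by
  rcases isEmpty_or_nonempty (Fin n) with hn | hn
  · exact tendsto_const_nhds.congr fun _ => Subsingleton.elim _ _
  have hρ : spectralRadius ℂ (Φ.map (algebraMap ℝ ℂ)) < 1 := by
    simpa using spectrum.spectralRadius_lt_of_forall_lt _ fun z hz =>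
      (show ‖z‖₊ < 1 by exact_mod_cast hΦ z hz)
  have hpow : ∀ m : ℕ, Φ.map Complex.ofReal ^ m = (Φ ^ m).map Complex.ofReal :=
    fun m => (map_pow Complex.ofRealHom.mapMatrix Φ m).symm
  -- `Φ ^ m` is the entrywise real part of the `m`-th power of the complexification
  have := ((continuous_id.matrix_map Complex.continuous_re).tendsto 0).comp
    (spectrum.tendsto_pow_atTop_nhds_zero hρ)
  simpa [Function.comp_def, hpow, Matrix.map_map] using this

theorem exists_norm_phiProd_le_of_periodic {Abar : ℕ → Matrix (Fin n) (Fin n) ℝ} {T : ℕ}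
    (hT : 0 < T) (hper : Function.Periodic Abar T) (hstab : ∀ k, SchurStable (phiProd Abar k T)) :
    ∃ N, 0 < N ∧ ∃ θ < 1, ∀ k, ‖phiProd Abar k N‖ ≤ θ := by
  have hev : ∀ᶠ m in atTop, ∀ j ∈ Finset.range T, ‖phiProd Abar j T ^ m‖ < 1 :=
    (eventually_all_finset _).2 fun j _ =>
      (hstab j).tendsto_pow_atTop_nhds_zero.norm.eventually (gt_mem_nhds (by simp))
  obtain ⟨m, hm, hm₀⟩ := (hev.and (eventually_gt_atTop 0)).exists
  have hperN := (periodic_phiProd hper (m * T)).comp (‖·‖)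
  obtain ⟨j, hj⟩ := hperN.exists_forall_le hT
  refine ⟨m * T, by positivity, _, ?_, hj⟩
  rw [← hperN.map_mod_nat j]
  simpa only [Function.comp_apply, phiProd_mul_of_periodic hper] using
    hm (j % T) (Finset.mem_range.2 (Nat.mod_lt j hT))

theorem tendsto_sub_phiProd_mul_mul_transpose {A E d : ℕ → Matrix (Fin n) (Fin n) ℝ}
    (hA : IsBoundedUnder (· ≤ ·) atTop ((‖·‖) ∘ A)) (hd : Tendsto d atTop (𝓝 0))
    (hE : ∀ k, E (k + 1) = A k * E k * (A k)ᵀ + d k) (h : ℕ) :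
    Tendsto (fun k => E (k + h) - phiProd A k h * E k * (phiProd A k h)ᵀ) atTop (𝓝 0) := by
  induction h with
  | zero => simp [phiProd]
  | succ h ih =>
    have hAh : IsBoundedUnder (· ≤ ·) atTop ((‖·‖) ∘ fun k => A (k + h)) :=
      (tendsto_add_atTop_nat h).isBoundedUnder_comp hA
    have hAhT : IsBoundedUnder (· ≤ ·) atTop ((‖·‖) ∘ fun k => (A (k + h))ᵀ) := by
      simpa only [Function.comp_def, Matrix.l2_opNorm_transpose] using hAh
    have hstep : ∀ k, E (k + (h + 1)) - phiProd A k (h + 1) * E k * (phiProd A k (h + 1))ᵀ =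
        A (k + h) * (E (k + h) - phiProd A k h * E k * (phiProd A k h)ᵀ) * (A (k + h))ᵀ +
          d (k + h) := by
      intro k
      rw [← add_assoc, hE, phiProd, Matrix.transpose_mul]
      noncomm_ring
    simp only [hstep]
    simpa using ((isBoundedUnder_le_mul_tendsto_zero hAh ih).zero_mul_isBoundedUnder_le hAhT).add
      (hd.comp (tendsto_add_atTop_nat h))

theorem tendsto_zero_of_eventually_norm_phiProd_le {A E d : ℕ → Matrix (Fin n) (Fin n) ℝ}
    (hA : IsBoundedUnder (· ≤ ·) atTop ((‖·‖) ∘ A)) (hd : Tendsto d atTop (𝓝 0))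
    (hE : ∀ k, E (k + 1) = A k * E k * (A k)ᵀ + d k) {N : ℕ} (hN : 0 < N) {σ : ℝ} (hσ : σ < 1)
    (hΦ : ∀ᶠ k in atTop, ‖phiProd A k N‖ ≤ σ) :
    Tendsto E atTop (𝓝 0) := by
  have hR := tendsto_sub_phiProd_mul_mul_transpose hA hd hE N
  rw [tendsto_zero_iff_norm_tendsto_zero] at hR ⊢
  obtain ⟨k₀, hk₀⟩ := hΦ.exists
  have hσ₀ : 0 ≤ σ := (norm_nonneg _).trans hk₀
  refine tendsto_zero_of_eventually_add_le_mul_add hN (fun k => norm_nonneg _) (sq_nonneg σ)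
    (by nlinarith) hR ?_
  filter_upwards [hΦ] with k hk
  set Φ := phiProd A k N
  calc ‖E (k + N)‖ = ‖Φ * E k * Φᵀ + (E (k + N) - Φ * E k * Φᵀ)‖ := by rw [add_sub_cancel]
    _ ≤ ‖Φ‖ * ‖E k‖ * ‖Φ‖ + ‖E (k + N) - Φ * E k * Φᵀ‖ :=
      norm_add_le_of_le (norm_mul₃_le.trans_eq (by rw [Matrix.l2_opNorm_transpose])) le_rfl
    _ ≤ σ * ‖E k‖ * σ + ‖E (k + N) - Φ * E k * Φᵀ‖ := by gcongr
    _ = σ ^ 2 * ‖E k‖ + ‖E (k + N) - Φ * E k * Φᵀ‖ := by ring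

theorem statement5_general {n T : ℕ} (hT : 1 ≤ T)
    (A Abar Q Qbar : ℕ → Matrix (Fin n) (Fin n) ℝ)
    (hAconv : Tendsto (fun k => ‖A k - Abar k‖) atTop (nhds 0))
    (hQconv : Tendsto (fun k => ‖Q k - Qbar k‖) atTop (nhds 0))
    (hAbarPer : ∀ k, Abar (k + T) = Abar k)
    (hstab : ∀ k, SchurStable (phiProd Abar k T))
    (P Pbar : ℕ → Matrix (Fin n) (Fin n) ℝ)
    (hP : ∀ k, P (k + 1) = A k * P k * (A k)ᵀ + Q k)
    (hPbarPer : ∀ k, Pbar (k + T) = Pbar k)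
    (hPbar : ∀ k, Pbar (k + 1) = Abar k * Pbar k * (Abar k)ᵀ + Qbar k) :
    Tendsto (fun k => P k - Pbar k) atTop (nhds 0) := by
  have hAconvT : Tendsto (fun k => (A k - Abar k)ᵀ) atTop (𝓝 0) :=
    tendsto_zero_iff_norm_tendsto_zero.2 (by simpa only [Matrix.l2_opNorm_transpose] using hAconv)
  rw [← tendsto_zero_iff_norm_tendsto_zero] at hAconv hQconv
  have hAbar := Function.Periodic.isBoundedUnder_norm hAbarPer hT
  have hPbarBdd := Function.Periodic.isBoundedUnder_norm hPbarPer hT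
  have hA := isBoundedUnder_norm_of_tendsto_sub hAbar hAconv
  have hAT : IsBoundedUnder (· ≤ ·) atTop ((‖·‖) ∘ fun k => (A k)ᵀ) := by
    simpa only [Function.comp_def, Matrix.l2_opNorm_transpose] using hA
  have hd : Tendsto (fun k => (A k - Abar k) * Pbar k * (A k)ᵀ +
      Abar k * (Pbar k * (A k - Abar k)ᵀ) + (Q k - Qbar k)) atTop (𝓝 0) := by
    simpa using (((hAconv.zero_mul_isBoundedUnder_le hPbarBdd).zero_mul_isBoundedUnder_le hAT).add
      (isBoundedUnder_le_mul_tendsto_zero hAbar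
        (isBoundedUnder_le_mul_tendsto_zero hPbarBdd hAconvT))).add hQconv
  obtain ⟨N, hN, θ, hθ, hΦbar⟩ := exists_norm_phiProd_le_of_periodic hT hAbarPer hstab
  have hδ : ‖(0 : Matrix (Fin n) (Fin n) ℝ)‖ < (1 - θ) / 2 := by rw [norm_zero]; linarith
  have hΦ : ∀ᶠ k in atTop, ‖phiProd A k N‖ ≤ (1 + θ) / 2 := by
    filter_upwards [(tendsto_phiProd_sub_phiProd hAbar hAconv N).norm.eventually
      (gt_mem_nhds hδ)] with k hk
    linarith [norm_le_norm_add_norm_sub' (phiProd A k N) (phiProd Abar k N), hΦbar k]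
  refine tendsto_zero_of_eventually_norm_phiProd_le hA hd (fun k => ?_) hN
    (by linarith : (1 + θ) / 2 < 1) hΦ
  simp only [hP, hPbar, transpose_sub]
  noncomm_ring

/-- a Lyapunov recursion whose coefficients converge to 𝒯-periodic ones with Schur
stable monodromy converges to the 𝒯-periodic solution of the limiting periodic Lyapunov
equation. -/
theorem statement5 {n T : ℕ} (hT : 1 ≤ T)
    (A Abar Q Qbar : ℕ → Matrix (Fin n) (Fin n) ℝ)
    (hQsymm : ∀ k, (Q k).IsSymm)
    (hAconv : Tendsto (fun k => ‖A k - Abar k‖) atTop (nhds 0))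
    (hQconv : Tendsto (fun k => ‖Q k - Qbar k‖) atTop (nhds 0))
    (hAbarPer : ∀ k, Abar (k + T) = Abar k)
    (hQbarPer : ∀ k, Qbar (k + T) = Qbar k)
    (hQbarSymm : ∀ k, (Qbar k).IsSymm)
    (hstab : ∀ k, SchurStable (phiProd Abar k T))
    (P Pbar : ℕ → Matrix (Fin n) (Fin n) ℝ)
    (hP0 : (P 0).IsSymm)
    (hP : ∀ k, P (k + 1) = A k * P k * (A k)ᵀ + Q k)
    (hPbarPer : ∀ k, Pbar (k + T) = Pbar k)
    (hPbarSymm : ∀ k, (Pbar k).IsSymm)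
    (hPbar : ∀ k, Pbar (k + 1) = Abar k * Pbar k * (Abar k)ᵀ + Qbar k) :
    Tendsto (fun k => P k - Pbar k) atTop (nhds 0) :=
  statement5_general hT A Abar Q Qbar hAconv hQconv hAbarPer hstab P Pbar hP hPbarPer hPbar
end

section
/- Let A_k ∈ ℝ^{n×n}, C_k ∈ ℝ^{m×n}, symmetric positive semidefinite Q_k ∈ ℝ^{n×n} and symmetric positive definite R_{1,k}, R_{2,k} ∈ ℝ^{m×m} be given with R_{1,k} ≥ R_{2,k} for all k. For j = 1, 2, define the Riccati recursions P̄_{j,k+1} = A_k P̄_{j,k} A_kᵀ + Q_k − A_k P̄_{j,k} C_kᵀ (C_k P̄_{j,k} C_kᵀ + R_{j,k})^{−1} C_k P̄_{j,k} A_kᵀ with symmetric positive definite initial values satisfying P̄_{1,0} ≥ P̄_{2,0}. Then P̄_{1,k} ≥ P̄_{2,k} (Loewner order) for all k ∈ ℕ; consequently, if for j = 1, 2 the recursion converges to a 𝒯-periodic SPPS solution P_{j,·} of the corresponding DPRE, then P_{1,k} ≥ P_{2,k} for all k. -/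
open Matrix Filter

/-- The Riccati update map `P ↦ A P Aᵀ + Q − A P Cᵀ (C P Cᵀ + R)⁻¹ C P Aᵀ`. -/
noncomputable def riccatiMap {n : ℕ} {p : Type} [Fintype p] [DecidableEq p]
    (A : Matrix (Fin n) (Fin n) ℝ) (C : Matrix p (Fin n) ℝ)
    (Q : Matrix (Fin n) (Fin n) ℝ) (R : Matrix p p ℝ)
    (P : Matrix (Fin n) (Fin n) ℝ) : Matrix (Fin n) (Fin n) ℝ :=
  A * P * Aᵀ + Q - A * P * Cᵀ * (C * P * Cᵀ + R)⁻¹ * (C * P * Aᵀ)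

/-- An SPPS (symmetric periodic positive semidefinite) solution of the DPRE with
𝒯-periodic data. -/
def IsSPPS {n : ℕ} {p : Type} [Fintype p] [DecidableEq p] (T : ℕ)
    (A : ℕ → Matrix (Fin n) (Fin n) ℝ) (C : ℕ → Matrix p (Fin n) ℝ)
    (Q : ℕ → Matrix (Fin n) (Fin n) ℝ) (R : ℕ → Matrix p p ℝ)
    (P : ℕ → Matrix (Fin n) (Fin n) ℝ) : Prop :=
  (∀ k, P (k + T) = P k) ∧ (∀ k, (P k).PosSemidef) ∧
    ∀ k, P (k + 1) = riccatiMap (A k) (C k) (Q k) (R k) (P k)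

open Topology

/-!
For any gain `K`, completing the square writes the Riccati map as
`(A - K C) P (A - K C)ᵀ + K R Kᵀ + Q - (K - K_P) S_P (K - K_P)ᵀ`, where `S_P = C P Cᵀ + R` and
`K_P = A P Cᵀ S_P⁻¹` is the Kalman gain. Evaluating the completion for both recursions at the gain
`K_{P₁}` of the first one, the difference of the two updates becomes a sum of congruences of
`P₁ - P₂`, `R₁ - R₂` and `S_{P₂}`, so the ordering propagates by induction. For the periodic limits,
`P_j (k + i T) → Ps_j k` as `i → ∞`, and the positive semidefinite cone is closed.
-/

namespace Matrix

lemma PosSemidef.mul_mul_transpose_same {m n : Type*} [Fintype m] [Fintype n] {A : Matrix n n ℝ}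
    (hA : A.PosSemidef) (B : Matrix m n ℝ) : (B * A * Bᵀ).PosSemidef := by
  simpa only [conjTranspose_eq_transpose_of_trivial] using hA.mul_mul_conjTranspose_same B

lemma posDef_mul_mul_transpose_add {m n : Type*} [Fintype m] [Fintype n] {P : Matrix n n ℝ}
    {R : Matrix m m ℝ} (C : Matrix m n ℝ) (hP : P.PosSemidef) (hR : R.PosDef) :
    (C * P * Cᵀ + R).PosDef :=
  PosDef.posSemidef_add (hP.mul_mul_transpose_same C) hR

lemma PosSemidef.of_tendsto {n ι : Type*} [Fintype n] {l : Filter ι} [l.NeBot]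
    {f : ι → Matrix n n ℝ} {M : Matrix n n ℝ} (hM : M.IsHermitian) (h : Tendsto f l (𝓝 M))
    (hf : ∀ i, (f i).PosSemidef) : M.PosSemidef := by
  refine PosSemidef.of_dotProduct_mulVec_nonneg hM fun x => ?_
  have hcont : Continuous fun N : Matrix n n ℝ => star x ⬝ᵥ N *ᵥ x := by fun_prop
  exact ge_of_tendsto ((hcont.tendsto M).comp h)
    (Eventually.of_forall fun i => (hf i).dotProduct_mulVec_nonneg x)

end Matrix

lemma tendsto_add_nat_mul_of_tendsto_sub_periodic {G : Type*} [AddCommGroup G]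
    [TopologicalSpace G] [IsTopologicalAddGroup G] {f g : ℕ → G} {T : ℕ} (hT : 0 < T)
    (hg : Function.Periodic g T) (h : Tendsto (fun k => f k - g k) atTop (𝓝 0)) (k : ℕ) :
    Tendsto (fun i => f (k + i * T)) atTop (𝓝 (g k)) := by
  have hsub : Tendsto (fun i => k + i * T) atTop atTop :=
    tendsto_atTop_mono (fun i => (Nat.le_mul_of_pos_right i hT).trans (Nat.le_add_left _ k))
      tendsto_id
  have hper : ∀ i, g (k + i * T) = g k := fun i => by simpa using hg.nat_mul i k
  rw [← tendsto_sub_nhds_zero_iff]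
  simpa only [Function.comp_def, hper] using h.comp hsub

section Riccati

variable {n : ℕ} {p : Type} [Fintype p] [DecidableEq p]

lemma riccatiMap_eq_completion (A Q : Matrix (Fin n) (Fin n) ℝ) (C : Matrix p (Fin n) ℝ)
    {P : Matrix (Fin n) (Fin n) ℝ} {R : Matrix p p ℝ} (hP : P.IsSymm) (hR : R.IsSymm)
    (hS : IsUnit (C * P * Cᵀ + R)) (K : Matrix (Fin n) p ℝ) :
    riccatiMap A C Q R P =
      (A - K * C) * P * (A - K * C)ᵀ + K * R * Kᵀ + Q -
        (K - A * P * Cᵀ * (C * P * Cᵀ + R)⁻¹) * (C * P * Cᵀ + R) *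
          (K - A * P * Cᵀ * (C * P * Cᵀ + R)⁻¹)ᵀ := by
  unfold riccatiMap
  rw [isUnit_iff_isUnit_det] at hS
  generalize hSdef : C * P * Cᵀ + R = S at hS ⊢
  have hSinv : (S⁻¹)ᵀ = S⁻¹ := by
    rw [transpose_nonsing_inv, ← hSdef]
    simp [transpose_add, transpose_mul, hP.eq, hR.eq, Matrix.mul_assoc]
  have hSS : ∀ X : Matrix p (Fin n) ℝ, S * (S⁻¹ * X) = X := fun X => by
    rw [← Matrix.mul_assoc, mul_nonsing_inv _ hS, Matrix.one_mul]
  have hSS' : ∀ X : Matrix p (Fin n) ℝ, S⁻¹ * (S * X) = X := fun X => by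
    rw [← Matrix.mul_assoc, nonsing_inv_mul _ hS, Matrix.one_mul]
  have hCPC : ∀ X : Matrix p (Fin n) ℝ, C * (P * (Cᵀ * X)) = S * X - R * X := fun X => by
    simp [← hSdef, Matrix.add_mul, Matrix.mul_assoc]
  simp only [Matrix.sub_mul, Matrix.mul_sub, transpose_sub, transpose_mul, transpose_transpose,
    hP.eq, hSinv, Matrix.mul_assoc, hSS, hSS', hCPC]
  abel

lemma riccatiMap_posSemidef (A Q : Matrix (Fin n) (Fin n) ℝ) (C : Matrix p (Fin n) ℝ)
    {P : Matrix (Fin n) (Fin n) ℝ} {R : Matrix p p ℝ}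
    (hP : P.PosSemidef) (hQ : Q.PosSemidef) (hR : R.PosDef) :
    (riccatiMap A C Q R P).PosSemidef := by
  rw [riccatiMap_eq_completion A Q C (isHermitian_iff_isSymm.mp hP.isHermitian)
    (isHermitian_iff_isSymm.mp hR.isHermitian)
    ((posDef_mul_mul_transpose_add C hP hR).isUnit) (A * P * Cᵀ * (C * P * Cᵀ + R)⁻¹)]
  simp only [sub_self, Matrix.zero_mul, sub_zero]
  exact ((hP.mul_mul_transpose_same _).add (hR.posSemidef.mul_mul_transpose_same _)).add hQ

lemma riccatiMap_sub_posSemidef (A Q : Matrix (Fin n) (Fin n) ℝ) (C : Matrix p (Fin n) ℝ)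
    {P₁ P₂ : Matrix (Fin n) (Fin n) ℝ} {R₁ R₂ : Matrix p p ℝ}
    (hP₁ : P₁.PosSemidef) (hP₂ : P₂.PosSemidef) (hP : (P₁ - P₂).PosSemidef)
    (hR₁ : R₁.PosDef) (hR₂ : R₂.PosDef) (hR : (R₁ - R₂).PosSemidef) :
    (riccatiMap A C Q R₁ P₁ - riccatiMap A C Q R₂ P₂).PosSemidef := by
  set K := A * P₁ * Cᵀ * (C * P₁ * Cᵀ + R₁)⁻¹
  have hS₂ := posDef_mul_mul_transpose_add C hP₂ hR₂
  rw [riccatiMap_eq_completion A Q C (isHermitian_iff_isSymm.mp hP₁.isHermitian)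
      (isHermitian_iff_isSymm.mp hR₁.isHermitian)
      ((posDef_mul_mul_transpose_add C hP₁ hR₁).isUnit) K,
    riccatiMap_eq_completion A Q C (isHermitian_iff_isSymm.mp hP₂.isHermitian)
      (isHermitian_iff_isSymm.mp hR₂.isHermitian) hS₂.isUnit K,
    sub_self, Matrix.zero_mul, Matrix.zero_mul, sub_zero]
  set L := K - A * P₂ * Cᵀ * (C * P₂ * Cᵀ + R₂)⁻¹
  have hdiff : (A - K * C) * P₁ * (A - K * C)ᵀ + K * R₁ * Kᵀ + Q -
      ((A - K * C) * P₂ * (A - K * C)ᵀ + K * R₂ * Kᵀ + Q - L * (C * P₂ * Cᵀ + R₂) * Lᵀ) =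
      (A - K * C) * (P₁ - P₂) * (A - K * C)ᵀ + K * (R₁ - R₂) * Kᵀ +
        L * (C * P₂ * Cᵀ + R₂) * Lᵀ := by
    simp only [Matrix.mul_sub, Matrix.sub_mul]
    abel
  rw [hdiff]
  exact ((hP.mul_mul_transpose_same _).add (hR.mul_mul_transpose_same _)).add
    (hS₂.posSemidef.mul_mul_transpose_same _)

lemma posSemidef_of_riccati_recursion {A Q : ℕ → Matrix (Fin n) (Fin n) ℝ}
    {C : ℕ → Matrix p (Fin n) ℝ} {R : ℕ → Matrix p p ℝ}
    {P : ℕ → Matrix (Fin n) (Fin n) ℝ} (hQ : ∀ k, (Q k).PosSemidef) (hR : ∀ k, (R k).PosDef)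
    (h0 : (P 0).PosSemidef) (hP : ∀ k, P (k + 1) = riccatiMap (A k) (C k) (Q k) (R k) (P k))
    (k : ℕ) : (P k).PosSemidef := by
  induction k with
  | zero => exact h0
  | succ k ih => exact hP k ▸ riccatiMap_posSemidef _ _ _ ih (hQ k) (hR k)

lemma posSemidef_sub_of_riccati_recursion {A Q : ℕ → Matrix (Fin n) (Fin n) ℝ}
    {C : ℕ → Matrix p (Fin n) ℝ} {R₁ R₂ : ℕ → Matrix p p ℝ}
    {P₁ P₂ : ℕ → Matrix (Fin n) (Fin n) ℝ} (hQ : ∀ k, (Q k).PosSemidef)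
    (hR₁ : ∀ k, (R₁ k).PosDef) (hR₂ : ∀ k, (R₂ k).PosDef) (hR : ∀ k, (R₁ k - R₂ k).PosSemidef)
    (hP₁0 : (P₁ 0).PosSemidef) (hP₂0 : (P₂ 0).PosSemidef) (h0 : (P₁ 0 - P₂ 0).PosSemidef)
    (hP₁ : ∀ k, P₁ (k + 1) = riccatiMap (A k) (C k) (Q k) (R₁ k) (P₁ k))
    (hP₂ : ∀ k, P₂ (k + 1) = riccatiMap (A k) (C k) (Q k) (R₂ k) (P₂ k)) (k : ℕ) :
    (P₁ k - P₂ k).PosSemidef := by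
  induction k with
  | zero => exact h0
  | succ k ih =>
    rw [hP₁, hP₂]
    exact riccatiMap_sub_posSemidef _ _ _
      (posSemidef_of_riccati_recursion hQ hR₁ hP₁0 hP₁ k)
      (posSemidef_of_riccati_recursion hQ hR₂ hP₂0 hP₂ k) ih (hR₁ k) (hR₂ k) (hR k)

end Riccati

/-- the Riccati recursion is monotone in the measurement-noise covariance:
if `R₁ ≥ R₂ > 0` and `P̄₁,₀ ≥ P̄₂,₀ > 0`, then `P̄₁,k ≥ P̄₂,k` for all `k`; consequently, if
the two recursions converge to 𝒯-periodic SPPS solutions of the corresponding DPREs, those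
solutions are ordered as well. -/
theorem statement7 {n m T : ℕ} (hT : 1 ≤ T)
    (A : ℕ → Matrix (Fin n) (Fin n) ℝ) (C : ℕ → Matrix (Fin m) (Fin n) ℝ)
    (Q : ℕ → Matrix (Fin n) (Fin n) ℝ) (hQ : ∀ k, (Q k).PosSemidef)
    (R₁ R₂ : ℕ → Matrix (Fin m) (Fin m) ℝ)
    (hR₁ : ∀ k, (R₁ k).PosDef) (hR₂ : ∀ k, (R₂ k).PosDef)
    (hR : ∀ k, (R₁ k - R₂ k).PosSemidef)
    (P₁ P₂ : ℕ → Matrix (Fin n) (Fin n) ℝ)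
    (hP₁0 : (P₁ 0).PosDef) (hP₂0 : (P₂ 0).PosDef)
    (h0 : (P₁ 0 - P₂ 0).PosSemidef)
    (hP₁ : ∀ k, P₁ (k + 1) = riccatiMap (A k) (C k) (Q k) (R₁ k) (P₁ k))
    (hP₂ : ∀ k, P₂ (k + 1) = riccatiMap (A k) (C k) (Q k) (R₂ k) (P₂ k)) :
    (∀ k, (P₁ k - P₂ k).PosSemidef) ∧
    ∀ Ps₁ Ps₂ : ℕ → Matrix (Fin n) (Fin n) ℝ,
      IsSPPS T A C Q R₁ Ps₁ → IsSPPS T A C Q R₂ Ps₂ →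
      Tendsto (fun k => P₁ k - Ps₁ k) atTop (nhds 0) →
      Tendsto (fun k => P₂ k - Ps₂ k) atTop (nhds 0) →
      ∀ k, (Ps₁ k - Ps₂ k).PosSemidef := by
  have hord := posSemidef_sub_of_riccati_recursion hQ hR₁ hR₂ hR hP₁0.posSemidef
    hP₂0.posSemidef h0 hP₁ hP₂
  refine ⟨hord, fun Ps₁ Ps₂ hPs₁ hPs₂ hlim₁ hlim₂ k => ?_⟩
  exact PosSemidef.of_tendsto ((hPs₁.2.1 k).isHermitian.sub (hPs₂.2.1 k).isHermitian)
    ((tendsto_add_nat_mul_of_tendsto_sub_periodic hT hPs₁.1 hlim₁ k).sub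
      (tendsto_add_nat_mul_of_tendsto_sub_periodic hT hPs₂.1 hlim₂ k))
    (fun i => hord (k + i * T))
end

section
/- Let A ∈ ℝ^{n×n}, C ∈ ℝ^{m×n}, Q ∈ ℝ^{n×n} symmetric, P₁, P₂ ∈ ℝ^{n×n} symmetric positive semidefinite, and R₁, R₂ ∈ ℝ^{m×m} symmetric positive definite. For j = 1, 2 define K_j = A P_j Cᵀ (C P_j Cᵀ + R_j)^{−1}, Ã_j = A − K_j C, and the Riccati images P_j' = A P_j Aᵀ + Q − A P_j Cᵀ (C P_j Cᵀ + R_j)^{−1} C P_j Aᵀ. Then P₁' − P₂' = Ã₁ (P₁ − P₂) Ã₂ᵀ + K₁ (R₁ − R₂) K₂ᵀ. -/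
open Matrix

/-!
Write `S = C P Cᵀ + R` and `K = A P Cᵀ S⁻¹`, so that the Riccati image is `A P Aᵀ + Q - K C P Aᵀ`.
Expanding `(A - K₁ C) (P₁ - P₂) (A - K₂ C)ᵀ + K₁ (R₁ - R₂) K₂ᵀ`, the terms group into
`(A P₁ Cᵀ - K₁ S₁) K₂ᵀ` and `K₁ (C P₂ Aᵀ - S₂ K₂ᵀ)`, which vanish by the definition of the gains
(the second one because `P₂` and `R₂` are symmetric), and what is left is the difference of the
two Riccati images.
-/

namespace Matrix

variable {ι κ 𝕜 : Type*} [Fintype ι] [Fintype κ] [DecidableEq κ] [CommRing 𝕜]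

noncomputable def kalmanGain (A : Matrix ι ι 𝕜) (C : Matrix κ ι 𝕜) (P : Matrix ι ι 𝕜)
    (R : Matrix κ κ 𝕜) : Matrix ι κ 𝕜 :=
  A * P * Cᵀ * (C * P * Cᵀ + R)⁻¹

noncomputable def riccatiMap (A : Matrix ι ι 𝕜) (C : Matrix κ ι 𝕜) (Q P : Matrix ι ι 𝕜)
    (R : Matrix κ κ 𝕜) : Matrix ι ι 𝕜 :=
  A * P * Aᵀ + Q - kalmanGain A C P R * (C * P * Aᵀ)

section
variable (A : Matrix ι ι 𝕜) (C : Matrix κ ι 𝕜)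

theorem kalmanGain_mul {P : Matrix ι ι 𝕜} {R : Matrix κ κ 𝕜}
    (hS : IsUnit (C * P * Cᵀ + R).det) :
    kalmanGain A C P R * (C * P * Cᵀ + R) = A * P * Cᵀ := by
  rw [kalmanGain, Matrix.mul_assoc, nonsing_inv_mul _ hS, Matrix.mul_one]

theorem mul_kalmanGain_transpose {P : Matrix ι ι 𝕜} {R : Matrix κ κ 𝕜}
    (hS : IsUnit (C * P * Cᵀ + R).det) (hP : P.IsSymm) (hR : R.IsSymm) :
    (C * P * Cᵀ + R) * (kalmanGain A C P R)ᵀ = C * P * Aᵀ := by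
  have hSt : (C * P * Cᵀ + R)ᵀ = C * P * Cᵀ + R := by
    simp only [transpose_add, transpose_mul, transpose_transpose, hP.eq, hR.eq, Matrix.mul_assoc]
  rw [kalmanGain, transpose_mul, transpose_nonsing_inv, hSt, ← Matrix.mul_assoc,
    mul_nonsing_inv _ hS, Matrix.one_mul]
  simp only [transpose_mul, transpose_transpose, hP.eq, Matrix.mul_assoc]

theorem riccatiMap_sub_riccatiMap (Q : Matrix ι ι 𝕜) {P₁ P₂ : Matrix ι ι 𝕜}
    {R₁ R₂ : Matrix κ κ 𝕜} (hS₁ : IsUnit (C * P₁ * Cᵀ + R₁).det)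
    (hS₂ : IsUnit (C * P₂ * Cᵀ + R₂).det) (hP₂ : P₂.IsSymm) (hR₂ : R₂.IsSymm) :
    riccatiMap A C Q P₁ R₁ - riccatiMap A C Q P₂ R₂ =
      (A - kalmanGain A C P₁ R₁ * C) * (P₁ - P₂) * (A - kalmanGain A C P₂ R₂ * C)ᵀ +
        kalmanGain A C P₁ R₁ * (R₁ - R₂) * (kalmanGain A C P₂ R₂)ᵀ := by
  set K₁ := kalmanGain A C P₁ R₁
  set K₂ := kalmanGain A C P₂ R₂
  have h₁ : A * P₁ * Cᵀ - K₁ * (C * P₁ * Cᵀ + R₁) = 0 := by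
    rw [kalmanGain_mul A C hS₁, sub_self]
  have h₂ : C * P₂ * Aᵀ - (C * P₂ * Cᵀ + R₂) * K₂ᵀ = 0 := by
    rw [mul_kalmanGain_transpose A C hS₂ hP₂ hR₂, sub_self]
  have h₃ : A * P₂ * Cᵀ * K₂ᵀ = K₂ * (C * P₂ * Aᵀ) := by
    rw [← kalmanGain_mul A C hS₂, Matrix.mul_assoc, mul_kalmanGain_transpose A C hS₂ hP₂ hR₂]
  symm
  calc _ = A * P₁ * Aᵀ - K₁ * (C * P₁ * Aᵀ) - (A * P₂ * Aᵀ - A * P₂ * Cᵀ * K₂ᵀ)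
          - (A * P₁ * Cᵀ - K₁ * (C * P₁ * Cᵀ + R₁)) * K₂ᵀ
          + K₁ * (C * P₂ * Aᵀ - (C * P₂ * Cᵀ + R₂) * K₂ᵀ) := by
        simp only [Matrix.mul_sub, Matrix.sub_mul, Matrix.mul_add, Matrix.add_mul,
          transpose_sub, transpose_mul, Matrix.mul_assoc]
        abel
    _ = _ := by
        rw [h₁, h₂, h₃, Matrix.zero_mul, Matrix.mul_zero, riccatiMap, riccatiMap]
        abel

end

theorem isUnit_det_mul_mul_transpose_add {n m : Type*} [Fintype n] [Fintype m] [DecidableEq m]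
    {P : Matrix n n ℝ} {R : Matrix m m ℝ} (hP : P.PosSemidef) (hR : R.PosDef)
    (C : Matrix m n ℝ) : IsUnit (C * P * Cᵀ + R).det := by
  have hS : (C * P * Cᵀ + R).PosDef := by
    simpa using PosDef.posSemidef_add (hP.mul_mul_conjTranspose_same C) hR
  exact (isUnit_iff_isUnit_det _).mp hS.isUnit

end Matrix

theorem statement12_general {n m : ℕ}
    (A : Matrix (Fin n) (Fin n) ℝ) (C : Matrix (Fin m) (Fin n) ℝ)
    (Q : Matrix (Fin n) (Fin n) ℝ)
    (P₁ P₂ : Matrix (Fin n) (Fin n) ℝ) (hP₁ : P₁.PosSemidef) (hP₂ : P₂.PosSemidef)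
    (R₁ R₂ : Matrix (Fin m) (Fin m) ℝ) (hR₁ : R₁.PosDef) (hR₂ : R₂.PosDef)
    (K₁ K₂ : Matrix (Fin n) (Fin m) ℝ)
    (hK₁ : K₁ = A * P₁ * Cᵀ * (C * P₁ * Cᵀ + R₁)⁻¹)
    (hK₂ : K₂ = A * P₂ * Cᵀ * (C * P₂ * Cᵀ + R₂)⁻¹)
    (At₁ At₂ : Matrix (Fin n) (Fin n) ℝ)
    (hAt₁ : At₁ = A - K₁ * C) (hAt₂ : At₂ = A - K₂ * C)
    (P₁' P₂' : Matrix (Fin n) (Fin n) ℝ)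
    (hP₁' : P₁' = A * P₁ * Aᵀ + Q - A * P₁ * Cᵀ * (C * P₁ * Cᵀ + R₁)⁻¹ * (C * P₁ * Aᵀ))
    (hP₂' : P₂' = A * P₂ * Aᵀ + Q - A * P₂ * Cᵀ * (C * P₂ * Cᵀ + R₂)⁻¹ * (C * P₂ * Aᵀ)) :
    P₁' - P₂' = At₁ * (P₁ - P₂) * At₂ᵀ + K₁ * (R₁ - R₂) * K₂ᵀ := by
  subst hAt₁ hAt₂ hK₁ hK₂ hP₁' hP₂'
  exact riccatiMap_sub_riccatiMap A C Q (isUnit_det_mul_mul_transpose_add hP₁ hR₁ C)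
    (isUnit_det_mul_mul_transpose_add hP₂ hR₂ C) (isHermitian_iff_isSymm.mp hP₂.isHermitian)
    (isHermitian_iff_isSymm.mp hR₂.isHermitian)

/-- the difference of two Riccati images.
With `K_j = A P_j Cᵀ (C P_j Cᵀ + R_j)⁻¹`, `At_j = A − K_j C`, and
`P_j' = A P_j Aᵀ + Q − A P_j Cᵀ (C P_j Cᵀ + R_j)⁻¹ C P_j Aᵀ`, one has
`P₁' − P₂' = At₁ (P₁ − P₂) At₂ᵀ + K₁ (R₁ − R₂) K₂ᵀ`. -/
theorem statement12 {n m : ℕ}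
    (A : Matrix (Fin n) (Fin n) ℝ) (C : Matrix (Fin m) (Fin n) ℝ)
    (Q : Matrix (Fin n) (Fin n) ℝ) (hQ : Q.IsSymm)
    (P₁ P₂ : Matrix (Fin n) (Fin n) ℝ) (hP₁ : P₁.PosSemidef) (hP₂ : P₂.PosSemidef)
    (R₁ R₂ : Matrix (Fin m) (Fin m) ℝ) (hR₁ : R₁.PosDef) (hR₂ : R₂.PosDef)
    (K₁ K₂ : Matrix (Fin n) (Fin m) ℝ)
    (hK₁ : K₁ = A * P₁ * Cᵀ * (C * P₁ * Cᵀ + R₁)⁻¹)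
    (hK₂ : K₂ = A * P₂ * Cᵀ * (C * P₂ * Cᵀ + R₂)⁻¹)
    (At₁ At₂ : Matrix (Fin n) (Fin n) ℝ)
    (hAt₁ : At₁ = A - K₁ * C) (hAt₂ : At₂ = A - K₂ * C)
    (P₁' P₂' : Matrix (Fin n) (Fin n) ℝ)
    (hP₁' : P₁' = A * P₁ * Aᵀ + Q - A * P₁ * Cᵀ * (C * P₁ * Cᵀ + R₁)⁻¹ * (C * P₁ * Aᵀ))
    (hP₂' : P₂' = A * P₂ * Aᵀ + Q - A * P₂ * Cᵀ * (C * P₂ * Cᵀ + R₂)⁻¹ * (C * P₂ * Aᵀ)) :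
    P₁' - P₂' = At₁ * (P₁ - P₂) * At₂ᵀ + K₁ * (R₁ - R₂) * K₂ᵀ :=
  statement12_general A C Q P₁ P₂ hP₁ hP₂ R₁ R₂ hR₁ hR₂ K₁ K₂ hK₁ hK₂ At₁ At₂ hAt₁ hAt₂ P₁' P₂' hP₁'
    hP₂'
end

section
/- For every matrix A ∈ ℝ^{n×n} and every k ∈ ℕ, ‖A^k‖₂ ≤ √n · Σ_{j=0}^{n−1} C(n−1, j) C(k, j) ‖A‖₂^j ρ(A)^{k−j}, where C(m, j) denotes the binomial coefficient (with C(k, j) = 0 for j > k). -/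
open Matrix

/-- The (real) spectral radius of a real square matrix, via its complex spectrum. -/
noncomputable def specRad {n : ℕ} (A : Matrix (Fin n) (Fin n) ℝ) : ℝ :=
  (spectralRadius ℂ (A.map (algebraMap ℝ ℂ))).toReal

open scoped Matrix.Norms.L2Operator

/-!
Complexify `A` and take a Schur form `A = U T Uᴴ` with `U` unitary and `T` upper triangular, so
that `‖A ^ k‖ = ‖T ^ k‖`. The diagonal of `T` consists of eigenvalues, hence is bounded by `ρ(A)`,
and every entry of `T` is bounded by `‖T‖ = ‖A‖`. Entrywise, `|T ^ k|` is therefore dominated by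
`(ρ(A) I + ‖A‖ N) ^ k`, where `N` is the strictly upper triangular all-ones matrix. Expanding by the
binomial theorem, the row sums of this majorant are at most
`∑ j, C(n-1, j) C(k, j) ‖A‖ ^ j ρ(A) ^ (k - j)`, because the row sums of `N ^ j` are binomial
coefficients `C(n-1-p, j)`; finally `‖M‖₂ ≤ √n · max_p ∑_q |M p q|`.
-/

open Finset WithLp
open scoped InnerProductSpace ENNReal

theorem Nat.sum_range_choose_eq_choose_succ (m j : ℕ) :
    ∑ t ∈ range m, t.choose j = m.choose (j + 1) := by
  induction m with
  | zero => simp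
  | succ m ih => rw [sum_range_succ, ih, Nat.choose_succ_succ', add_comm]

theorem Fin.sum_ite_lt_choose_sub {n : ℕ} (p : Fin n) (j : ℕ) :
    ∑ q : Fin n, (if p < q then (n - 1 - q).choose j else 0) = (n - 1 - p).choose (j + 1) := by
  calc ∑ q : Fin n, (if p < q then (n - 1 - q).choose j else 0)
      = ∑ q ∈ range n, if (p : ℕ) < q then (n - 1 - q).choose j else 0 :=
        Fin.sum_univ_eq_sum_range (fun q => if (p : ℕ) < q then (n - 1 - q).choose j else 0) n
    _ = ∑ t ∈ range n, if (p : ℕ) < n - 1 - t then t.choose j else 0 := by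
        rw [← sum_range_reflect]
        refine sum_congr rfl fun t ht => ?_
        rw [mem_range] at ht
        rw [Nat.sub_sub_self (by omega)]
    _ = ∑ t ∈ range (n - 1 - p), t.choose j := by
        rw [← sum_filter]
        congr 1
        ext t
        simp only [mem_filter, mem_range]
        omega
    _ = (n - 1 - p).choose (j + 1) := Nat.sum_range_choose_eq_choose_succ _ _

theorem EuclideanSpace.norm_sq_eq_norm_re_sq_add_norm_im_sq {ι : Type*} [Fintype ι]
    (w : EuclideanSpace ℂ ι) :
    ‖w‖ ^ 2 = ‖toLp 2 fun i => (w i).re‖ ^ 2 + ‖toLp 2 fun i => (w i).im‖ ^ 2 := by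
  rw [EuclideanSpace.norm_sq_eq, EuclideanSpace.norm_sq_eq, EuclideanSpace.norm_sq_eq,
    ← sum_add_distrib]
  refine sum_congr rfl fun i _ => ?_
  rw [Complex.sq_norm, Complex.normSq_apply, Real.norm_eq_abs, Real.norm_eq_abs, sq_abs, sq_abs,
    sq, sq]

theorem LinearMap.exists_orthonormal_inner_apply_eq_zero_of_lt
    {E : Type*} [NormedAddCommGroup E] [InnerProductSpace ℂ E] [FiniteDimensional ℂ E]
    {n : ℕ} (hn : Module.finrank ℂ E = n) (f : E →ₗ[ℂ] E) :
    ∃ b : Fin n → E, Orthonormal ℂ b ∧ ∀ i j, j < i → ⟪b i, f (b j)⟫_ℂ = 0 := by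
  induction n generalizing E with
  | zero => exact ⟨Fin.elim0, orthonormal_iff_ite.mpr fun i => i.elim0, fun i => i.elim0⟩
  | succ n ih =>
    have : Nontrivial E := Module.nontrivial_of_finrank_eq_succ hn
    have : Fact (Module.finrank ℂ E = n + 1) := ⟨hn⟩
    -- `(ℂ ∙ e)ᗮ` is `f`-invariant for an eigenvector `e` of the adjoint, so `e` can go last
    obtain ⟨μ, hμ⟩ := Module.End.exists_eigenvalue (LinearMap.adjoint f)
    obtain ⟨v, hv⟩ := hμ.exists_hasEigenvector
    set e := (‖v‖⁻¹ : ℂ) • v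
    have he : ‖e‖ = 1 := norm_smul_inv_norm hv.2
    have hfe : LinearMap.adjoint f e = μ • e := by
      rw [map_smul, hv.apply_eq_smul, smul_comm]
    set W := (ℂ ∙ e)ᗮ
    have hW : ∀ w ∈ W, f w ∈ W := fun w hw => by
      rw [Submodule.mem_orthogonal_singleton_iff_inner_right] at hw ⊢
      rw [← LinearMap.adjoint_inner_left, hfe, inner_smul_left, hw, mul_zero]
    obtain ⟨b, hb, hbf⟩ := ih (Submodule.finrank_orthogonal_span_singleton
      (norm_ne_zero_iff.mp (by simp [he]))) (f.restrict hW)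
    have hbe : ∀ i, ⟪e, (b i : E)⟫_ℂ = 0 := fun i =>
      Submodule.mem_orthogonal_singleton_iff_inner_right.mp (b i).2
    refine ⟨Fin.snoc (α := fun _ => E) (fun i => (b i : E)) e, ?_, ?_⟩
    · rw [orthonormal_iff_ite] at hb ⊢
      intro i j
      induction i using Fin.lastCases <;> induction j using Fin.lastCases <;>
        simp [he, hbe, inner_eq_zero_symm.mp (hbe _), ← hb, Fin.castSucc_ne_last,
          (Fin.castSucc_ne_last _).symm]
    · intro i j hji
      induction i using Fin.lastCases with
      | last =>
        induction j using Fin.lastCases with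
        | last => exact absurd hji (lt_irrefl _)
        | cast j =>
          simpa using Submodule.mem_orthogonal_singleton_iff_inner_right.mp (hW _ (b j).2)
      | cast i =>
        induction j using Fin.lastCases with
        | last => exact absurd hji (not_lt.mpr (Fin.castSucc_lt_last i).le)
        | cast j =>
          simpa [Submodule.coe_inner] using hbf i j (Fin.castSucc_lt_castSucc_iff.mp hji)

theorem spectrum.norm_le_toReal_spectralRadius {𝕜 A : Type*} [NormedField 𝕜] [NormedRing A]
    [NormedAlgebra 𝕜 A] [CompleteSpace A] [NormOneClass A] {a : A} {z : 𝕜}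
    (hz : z ∈ spectrum 𝕜 a) : ‖z‖ ≤ (spectralRadius 𝕜 a).toReal := by
  have hfin : spectralRadius 𝕜 a ≠ ∞ :=
    ne_top_of_le_ne_top ENNReal.coe_ne_top (spectralRadius_le_nnnorm a)
  simpa using ENNReal.toReal_mono hfin (le_iSup₂ (α := ℝ≥0∞) z hz)

theorem CStarRing.norm_star_mul_mul_of_mem_unitary {E : Type*} [NormedRing E] [StarRing E]
    [CStarRing E] {U : E} (hU : U ∈ unitary E) (X : E) : ‖star U * X * U‖ = ‖X‖ := by
  rw [norm_mul_mem_unitary _ hU, norm_mem_unitary_mul _ (Unitary.star_mem hU)]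

namespace Matrix

def strictUpperOnes (n : ℕ) : Matrix (Fin n) (Fin n) ℝ :=
  of fun p q => if p < q then (1 : ℝ) else 0

theorem sum_strictUpperOnes_pow_apply {n : ℕ} (j : ℕ) (p : Fin n) :
    ∑ q, (strictUpperOnes n ^ j) p q = (n - 1 - p).choose j := by
  induction j generalizing p with
  | zero => simp [one_apply]
  | succ j ih =>
    simp only [pow_succ', mul_apply]
    rw [sum_comm]
    simp only [← mul_sum, ih]
    simp only [strictUpperOnes, of_apply, ite_mul, one_mul, zero_mul]
    exact_mod_cast Fin.sum_ite_lt_choose_sub p j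

theorem sum_smul_one_add_smul_strictUpperOnes_pow_apply {n : ℕ} (r c : ℝ) (k : ℕ) (p : Fin n) :
    ∑ q, ((r • 1 + c • strictUpperOnes n) ^ k) p q =
      ∑ j ∈ range (k + 1), (k.choose j : ℝ) * c ^ j * r ^ (k - j) * (n - 1 - p).choose j := by
  have hcomm : Commute (c • strictUpperOnes n) (r • 1) := (Commute.one_right _).smul_right r
  rw [add_comm, hcomm.add_pow]
  simp only [sum_apply]
  rw [sum_comm]
  refine sum_congr rfl fun j _ => ?_
  rw [smul_pow, smul_pow, one_pow, Matrix.mul_smul, mul_one, ← Nat.cast_comm, ← nsmul_eq_mul,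
    ← Nat.cast_smul_eq_nsmul ℝ, smul_smul, smul_smul]
  simp only [smul_apply, smul_eq_mul, ← mul_sum, sum_strictUpperOnes_pow_apply]
  ring

theorem norm_pow_apply_le_pow_apply {ι R : Type*} [Fintype ι] [DecidableEq ι] [NormedRing R]
    [NormOneClass R] {S : Matrix ι ι R} {M : Matrix ι ι ℝ} (h : ∀ p q, ‖S p q‖ ≤ M p q)
    (k : ℕ) (p q : ι) : ‖(S ^ k) p q‖ ≤ (M ^ k) p q := by
  induction k generalizing q with
  | zero => by_cases hpq : p = q <;> simp [hpq]
  | succ k ih =>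
    rw [pow_succ, pow_succ, mul_apply, mul_apply]
    refine (norm_sum_le _ _).trans (sum_le_sum fun i _ => ?_)
    exact (norm_mul_le _ _).trans
      (mul_le_mul (ih i) (h i q) (norm_nonneg _) ((norm_nonneg _).trans (ih i)))

theorem re_map_algebraMap_mulVec {m n : Type*} [Fintype n] (A : Matrix m n ℝ) (z : n → ℂ) (i : m) :
    ((A.map (algebraMap ℝ ℂ) *ᵥ z) i).re = (A *ᵥ fun j => (z j).re) i := by
  simp [mulVec, dotProduct, Complex.re_sum]

theorem im_map_algebraMap_mulVec {m n : Type*} [Fintype n] (A : Matrix m n ℝ) (z : n → ℂ) (i : m) :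
    ((A.map (algebraMap ℝ ℂ) *ᵥ z) i).im = (A *ᵥ fun j => (z j).im) i := by
  simp [mulVec, dotProduct, Complex.im_sum]

section L2OpNorm

variable {𝕜 : Type*} [RCLike 𝕜] {m n : Type*} [Fintype m] [Fintype n] [DecidableEq n]

theorem l2_opNorm_le_of_mulVec {M : Matrix m n 𝕜} {c : ℝ} (hc : 0 ≤ c)
    (h : ∀ x : EuclideanSpace 𝕜 n, ‖toLp 2 (M *ᵥ ofLp x)‖ ≤ c * ‖x‖) : ‖M‖ ≤ c := by
  rw [l2_opNorm_def]
  exact ContinuousLinearMap.opNorm_le_bound _ hc h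

theorem norm_apply_le_l2_opNorm (M : Matrix m n 𝕜) (i : m) (j : n) : ‖M i j‖ ≤ ‖M‖ := by
  have h := M.l2_opNorm_mulVec (EuclideanSpace.single j 1)
  rw [PiLp.norm_single, norm_one, mul_one] at h
  refine le_trans (le_of_eq ?_) ((PiLp.norm_apply_le _ i).trans h)
  simp [EuclideanSpace.single]

theorem l2_opNorm_le_sqrt_card_mul {M : Matrix m n 𝕜} {S : ℝ} (hS : 0 ≤ S)
    (h : ∀ i, ∑ j, ‖M i j‖ ≤ S) : ‖M‖ ≤ √(Fintype.card m) * S := by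
  refine l2_opNorm_le_of_mulVec (by positivity) fun x => ?_
  have hrow : ∀ i, ‖(M *ᵥ ofLp x) i‖ ≤ S * ‖x‖ := fun i =>
    calc ‖(M *ᵥ ofLp x) i‖ ≤ ∑ j, ‖M i j‖ * ‖x‖ := by
          refine (norm_sum_le _ _).trans (sum_le_sum fun j _ => ?_)
          rw [norm_mul]
          exact mul_le_mul_of_nonneg_left (PiLp.norm_apply_le x j) (norm_nonneg _)
      _ ≤ S * ‖x‖ := by
          rw [← sum_mul]
          exact mul_le_mul_of_nonneg_right (h i) (norm_nonneg _)
  refine le_of_sq_le_sq ?_ (by positivity)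
  calc _ = ∑ i, ‖(M *ᵥ ofLp x) i‖ ^ 2 := EuclideanSpace.norm_sq_eq _
    _ ≤ ∑ _i : m, (S * ‖x‖) ^ 2 := sum_le_sum fun i _ => by gcongr; exact hrow i
    _ = (√(Fintype.card m) * S * ‖x‖) ^ 2 := by
      rw [sum_const, card_univ, nsmul_eq_mul, mul_pow (√_ * S), mul_pow √_,
        Real.sq_sqrt (Nat.cast_nonneg _)]
      ring

theorem l2_opNorm_map_algebraMap (A : Matrix m n ℝ) : ‖A.map (algebraMap ℝ ℂ)‖ = ‖A‖ := by
  refine le_antisymm (l2_opNorm_le_of_mulVec (norm_nonneg _) fun z => ?_)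
    (l2_opNorm_le_of_mulVec (norm_nonneg _) fun x => ?_)
  · refine le_of_sq_le_sq ?_ (by positivity)
    calc _ = ‖toLp 2 (A *ᵥ fun j => (z j).re)‖ ^ 2 + ‖toLp 2 (A *ᵥ fun j => (z j).im)‖ ^ 2 := by
          rw [EuclideanSpace.norm_sq_eq_norm_re_sq_add_norm_im_sq]
          simp only [re_map_algebraMap_mulVec, im_map_algebraMap_mulVec]
      _ ≤ (‖A‖ * ‖toLp 2 fun j => (z j).re‖) ^ 2 + (‖A‖ * ‖toLp 2 fun j => (z j).im‖) ^ 2 := by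
          gcongr
          exacts [A.l2_opNorm_mulVec (toLp 2 fun j => (z j).re),
            A.l2_opNorm_mulVec (toLp 2 fun j => (z j).im)]
      _ = (‖A‖ * ‖z‖) ^ 2 := by
          rw [mul_pow, mul_pow, mul_pow, EuclideanSpace.norm_sq_eq_norm_re_sq_add_norm_im_sq z]
          ring
  · set z : EuclideanSpace ℂ n := toLp 2 fun j => (x j : ℂ)
    have hre : (fun j => (z j).re) = ofLp x := funext fun j => Complex.ofReal_re _
    have him : (fun j => (z j).im) = 0 := funext fun j => Complex.ofReal_im _
    have hz : ‖z‖ = ‖x‖ := by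
      rw [← sq_eq_sq₀ (norm_nonneg _) (norm_nonneg _),
        EuclideanSpace.norm_sq_eq_norm_re_sq_add_norm_im_sq, hre, him]
      simp
    have hAz : ‖toLp 2 (A.map (algebraMap ℝ ℂ) *ᵥ ofLp z)‖ = ‖toLp 2 (A *ᵥ ofLp x)‖ := by
      rw [← sq_eq_sq₀ (norm_nonneg _) (norm_nonneg _),
        EuclideanSpace.norm_sq_eq_norm_re_sq_add_norm_im_sq]
      simp only [re_map_algebraMap_mulVec, im_map_algebraMap_mulVec, hre, him, mulVec_zero]
      simp [← Pi.zero_def]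
    rw [← hAz, ← hz]
    exact l2_opNorm_mulVec _ z

end L2OpNorm

theorem conjTranspose_mul_mul_apply_eq_inner {𝕜 ι κ : Type*} [RCLike 𝕜] [Fintype ι]
    [DecidableEq ι] (b : κ → EuclideanSpace 𝕜 ι) (M : Matrix ι ι 𝕜) (i j : κ) :
    ((of fun p j => b j p)ᴴ * M * of fun p j => b j p) i j =
      ⟪b i, toEuclideanLin M (b j)⟫_𝕜 := by
  simp only [mul_apply, PiLp.inner_apply, toLpLin_apply, mulVec, dotProduct, sum_mul,
    conjTranspose_apply, of_apply, RCLike.inner_apply]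
  rw [sum_comm]
  exact sum_congr rfl fun _ _ => sum_congr rfl fun _ _ => by simp; ring

theorem exists_mem_unitaryGroup_isUpperTriangular {n : ℕ} (B : Matrix (Fin n) (Fin n) ℂ) :
    ∃ U ∈ unitaryGroup (Fin n) ℂ, (star U * B * U).IsUpperTriangular := by
  obtain ⟨b, hb, hbB⟩ := (toEuclideanLin B).exists_orthonormal_inner_apply_eq_zero_of_lt
    finrank_euclideanSpace_fin
  refine ⟨of fun p j => b j p, ?_, fun i j hji => ?_⟩
  · rw [mem_unitaryGroup_iff']
    ext i j
    simpa [orthonormal_iff_ite.mp hb, one_apply, star_eq_conjTranspose] using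
      conjTranspose_mul_mul_apply_eq_inner b 1 i j
  · rw [star_eq_conjTranspose, conjTranspose_mul_mul_apply_eq_inner]
    exact hbB i j hji

theorem IsUpperTriangular.apply_self_mem_spectrum {ι R : Type*} [Fintype ι] [DecidableEq ι]
    [LinearOrder ι] [CommRing R] [Nontrivial R] {M : Matrix ι ι R} (hM : M.IsUpperTriangular)
    (i : ι) : M i i ∈ spectrum R M := by
  refine mem_spectrum_of_isRoot_charpoly ?_
  rw [Polynomial.IsRoot, charpoly_of_isUpperTriangular M hM, Polynomial.eval_prod]
  exact prod_eq_zero (mem_univ i) (by simp)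

theorem IsUpperTriangular.l2_opNorm_pow_le {𝕜 : Type*} [RCLike 𝕜] {n : ℕ}
    {T : Matrix (Fin n) (Fin n) 𝕜} (hT : T.IsUpperTriangular) {r c : ℝ} (hr : 0 ≤ r)
    (hc : 0 ≤ c) (hdiag : ∀ i, ‖T i i‖ ≤ r) (hoff : ∀ i j, i < j → ‖T i j‖ ≤ c) (k : ℕ) :
    ‖T ^ k‖ ≤ √n * ∑ j ∈ range n,
      ((n - 1).choose j : ℝ) * (k.choose j : ℝ) * c ^ j * r ^ (k - j) := by
  have hmajor : ∀ p q, ‖T p q‖ ≤ (r • 1 + c • strictUpperOnes n) p q := by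
    intro p q
    rcases lt_trichotomy p q with h | rfl | h
    · simp [strictUpperOnes, h, h.ne, hoff p q h]
    · simp [strictUpperOnes, hdiag]
    · simp [strictUpperOnes, h.ne', h.not_gt, hT h]
  suffices hrow : ∀ p, ∑ q, ‖(T ^ k) p q‖ ≤ ∑ j ∈ range n,
      ((n - 1).choose j : ℝ) * (k.choose j : ℝ) * c ^ j * r ^ (k - j) by
    simpa using l2_opNorm_le_sqrt_card_mul (by positivity) hrow
  intro p
  have hvanish : ∀ j ≥ min n (k + 1),
      ((n - 1).choose j : ℝ) * (k.choose j : ℝ) * c ^ j * r ^ (k - j) = 0 := by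
    intro j hj
    rcases le_or_gt n j with hnj | hjn
    · rw [Nat.choose_eq_zero_of_lt (by have := p.pos; omega : n - 1 < j)]
      simp
    · rw [Nat.choose_eq_zero_of_lt (by omega : k < j)]
      simp
  calc ∑ q, ‖(T ^ k) p q‖ ≤ ∑ q, ((r • 1 + c • strictUpperOnes n) ^ k) p q :=
        sum_le_sum fun q _ => norm_pow_apply_le_pow_apply hmajor k p q
    _ = ∑ j ∈ range (k + 1), (k.choose j : ℝ) * c ^ j * r ^ (k - j) * (n - 1 - p).choose j :=
        sum_smul_one_add_smul_strictUpperOnes_pow_apply r c k p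
    _ ≤ ∑ j ∈ range (k + 1), ((n - 1).choose j : ℝ) * (k.choose j : ℝ) * c ^ j * r ^ (k - j) :=
        sum_le_sum fun j _ => by
          rw [mul_comm]
          simp only [mul_assoc]
          exact mul_le_mul_of_nonneg_right
            (by exact_mod_cast Nat.choose_le_choose j (Nat.sub_le _ _)) (by positivity)
    _ = ∑ j ∈ range n, ((n - 1).choose j : ℝ) * (k.choose j : ℝ) * c ^ j * r ^ (k - j) := by
        rw [eventually_constant_sum hvanish (min_le_right _ _),
          eventually_constant_sum hvanish (min_le_left _ _)]

end Matrix

/-- for every real `n × n` matrix `A` and every `k`,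
`‖A^k‖₂ ≤ √n · Σ_{j=0}^{n−1} C(n−1,j) C(k,j) ‖A‖₂^j ρ(A)^{k−j}`
(where `C(k,j) = 0` for `j > k`). -/
theorem statement16 {n : ℕ} (A : Matrix (Fin n) (Fin n) ℝ) (k : ℕ) :
    ‖A ^ k‖ ≤ Real.sqrt n * ∑ j ∈ Finset.range n,
      (Nat.choose (n - 1) j : ℝ) * (Nat.choose k j : ℝ) * ‖A‖ ^ j * specRad A ^ (k - j) := by
  set B := A.map (algebraMap ℝ ℂ)
  obtain ⟨U, hU, hT⟩ := B.exists_mem_unitaryGroup_isUpperTriangular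
  set T := star U * B * U
  have hconj : ∀ j : ℕ, T ^ j = star U * B ^ j * U := fun j => by
    simpa using (map_pow (Unitary.conjStarAlgAut ℂ _ (star ⟨U, hU⟩)) B j).symm
  have hnorm : ∀ j : ℕ, ‖T ^ j‖ = ‖A ^ j‖ := fun j => by
    rw [hconj, CStarRing.norm_star_mul_mul_of_mem_unitary hU, ← l2_opNorm_map_algebraMap,
      Matrix.map_pow]
  have hspec : spectrum ℂ T = spectrum ℂ B := by
    simpa using AlgEquiv.spectrum_eq (Unitary.conjStarAlgAut ℂ _ (star ⟨U, hU⟩)) B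
  rw [← hnorm]
  refine hT.l2_opNorm_pow_le ENNReal.toReal_nonneg (norm_nonneg A) (fun i => ?_)
    (fun i j _ => (T.norm_apply_le_l2_opNorm i j).trans (by simpa using (hnorm 1).le)) k
  have : Nonempty (Fin n) := ⟨i⟩
  exact spectrum.norm_le_toReal_spectralRadius (hspec ▸ hT.apply_self_mem_spectrum i)
end

section
/- Under the sensor-network assumptions, there exist constants M′ > 0 and q ∈ (0,1) such that for every sensor i ∈ {1,…,N}, every integer L ≥ d, and every k ∈ ℕ, ‖R_k^{−1} − (R̃_{i,k}^{(L)})^{−1}‖₂ ≤ M′ q^L, where R_k = blockdiag(R_{1,k},…,R_{N,k}) and R̃_{i,k}^{(L)} = blockdiag(R_{1,k}/(N l_{i1}^{(L)}),…,R_{N,k}/(N l_{iN}^{(L)})). -/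
/-!
The weight `N * (𝓛 ^ L) i j` tends to `1` geometrically fast. Column `j` of `𝓛 ^ L` sums to `1`,
so each of its entries is within its spread (maximum minus minimum) of `1 / N`; and by Doeblin's
argument the spread contracts by the factor `1 - N ε` at every multiplication by `𝓛 ^ (d + 1)`,
where `ε > 0` is the least entry of `𝓛 ^ (d + 1)`. The matrix `R_k⁻¹ - (R̃_{i,k}^{(L)})⁻¹` is block
diagonal with blocks `(1 - N (𝓛 ^ L) i j) • R_{j,k}⁻¹`, and by periodicity only finitely many
`R_{j,k}⁻¹` occur.
-/

open Matrix Finset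

open scoped Matrix.Norms.L2Operator

section Spread

variable {ι : Type*} [Fintype ι] [Nonempty ι]

noncomputable def spread (x : ι → ℝ) : ℝ :=
  univ.sup' univ_nonempty x - univ.inf' univ_nonempty x

lemma abs_sub_le_spread (x : ι → ℝ) (t s : ι) : |x t - x s| ≤ spread x := by
  have hle : ∀ a b, x a - x b ≤ spread x := fun a b =>
    sub_le_sub (le_sup' x (mem_univ a)) (inf'_le x (mem_univ b))
  exact abs_sub_le_iff.2 ⟨hle t s, hle s t⟩

lemma spread_nonneg (x : ι → ℝ) : 0 ≤ spread x := by
  simpa using abs_sub_le_spread x (Classical.arbitrary ι) (Classical.arbitrary ι)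

lemma spread_le_of_forall_mem_Icc {x : ι → ℝ} {a b : ℝ} (h : ∀ t, x t ∈ Set.Icc a b) :
    spread x ≤ b - a :=
  sub_le_sub (sup'_le _ _ fun t _ => (h t).2) (le_inf' _ _ fun t _ => (h t).1)

lemma abs_card_mul_sub_sum_le_spread (x : ι → ℝ) (t : ι) :
    |Fintype.card ι * x t - ∑ s, x s| ≤ Fintype.card ι * spread x := by
  have hsum : Fintype.card ι * x t - ∑ s, x s = ∑ s, (x t - x s) := by
    rw [sum_sub_distrib, sum_const, card_univ, nsmul_eq_mul]
  calc |Fintype.card ι * x t - ∑ s, x s| ≤ ∑ s, |x t - x s| := by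
        rw [hsum]; exact abs_sum_le_sum_abs _ _
    _ ≤ ∑ _s : ι, spread x := sum_le_sum fun s _ => abs_sub_le_spread x t s
    _ = Fintype.card ι * spread x := by rw [sum_const, card_univ, nsmul_eq_mul]

/-- Doeblin's contraction: subtracting `ε` from every entry of `B` leaves a nonnegative matrix
with row sums `1 - card ι * ε`, which squeezes every entry of `B *ᵥ x` into an interval of
length `(1 - card ι * ε) * spread x`. -/
lemma spread_mulVec_le (B : Matrix ι ι ℝ) {ε : ℝ} (hB : ∀ i j, ε ≤ B i j) (hrow : B *ᵥ 1 = 1)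
    (x : ι → ℝ) : spread (B *ᵥ x) ≤ (1 - Fintype.card ι * ε) * spread x := by
  set M := univ.sup' univ_nonempty x
  set m := univ.inf' univ_nonempty x
  have hsplit : ∀ i, (B *ᵥ x) i = ∑ j, (B i j - ε) * x j + ε * ∑ j, x j := fun i => by
    simp only [mulVec, dotProduct, sub_mul, sum_sub_distrib, mul_sum]; ring
  have hweight : ∀ i, ∑ j, (B i j - ε) = 1 - Fintype.card ι * ε := fun i => by
    have := congrFun hrow i
    simp only [mulVec, dotProduct, Pi.one_apply, mul_one] at this
    rw [sum_sub_distrib, this, sum_const, card_univ, nsmul_eq_mul]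
  have hupper : ∀ i, (B *ᵥ x) i ≤ (1 - Fintype.card ι * ε) * M + ε * ∑ j, x j := fun i => by
    rw [hsplit, ← hweight i, sum_mul]
    gcongr with j
    · linarith [hB i j]
    · exact le_sup' x (mem_univ j)
  have hlower : ∀ i, (1 - Fintype.card ι * ε) * m + ε * ∑ j, x j ≤ (B *ᵥ x) i := fun i => by
    rw [hsplit, ← hweight i, sum_mul]
    gcongr with j
    · linarith [hB i j]
    · exact inf'_le x (mem_univ j)
  have := sup'_le univ_nonempty _ fun i _ => hupper i
  have := le_inf' univ_nonempty _ fun i _ => hlower i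
  rw [spread, spread]
  linarith

end Spread

lemma exists_pow_div_le_mul_pow {c : ℝ} (hc0 : 0 ≤ c) (hc1 : c < 1) {e : ℕ} (he : 0 < e) :
    ∃ C > 0, ∃ q ∈ Set.Ioo (0 : ℝ) 1, ∀ n, c ^ (n / e) ≤ C * q ^ n := by
  set c' := max c (1 / 2)
  have hc'0 : 0 < c' := lt_max_of_lt_right (by norm_num)
  have hc'1 : c' < 1 := max_lt hc1 (by norm_num)
  set q := c' ^ ((e : ℝ)⁻¹)
  have hqe : q ^ e = c' := Real.rpow_inv_natCast_pow hc'0.le he.ne'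
  have hq0 : 0 < q := Real.rpow_pos_of_pos hc'0 _
  have hq1 : q < 1 := Real.rpow_lt_one hc'0.le hc'1 (by positivity)
  refine ⟨c'⁻¹, inv_pos.2 hc'0, q, ⟨hq0, hq1⟩, fun n => ?_⟩
  have hn : n ≤ e * (n / e) + e := (Nat.lt_div_mul_add he).le.trans (by rw [mul_comm])
  calc c ^ (n / e) ≤ c' ^ (n / e) := pow_le_pow_left₀ hc0 (le_max_left _ _) _
    _ = c'⁻¹ * q ^ (e * (n / e) + e) := by
      rw [pow_add, pow_mul, hqe, mul_comm, mul_inv_cancel_right₀ hc'0.ne']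
    _ ≤ c'⁻¹ * q ^ n := by gcongr c'⁻¹ * ?_; exact pow_le_pow_of_le_one hq0.le hq1.le hn

section Consensus

variable {ι : Type*} [Fintype ι] [DecidableEq ι]

lemma pow_mulVec_one_of_mulVec_one {P : Matrix ι ι ℝ}
    (h : P *ᵥ 1 = 1) (n : ℕ) : P ^ n *ᵥ 1 = 1 := by
  induction n with
  | zero => simp
  | succ n ih => rw [pow_succ, ← mulVec_mulVec, h, ih]

lemma one_vecMul_pow_of_one_vecMul {P : Matrix ι ι ℝ}
    (h : 1 ᵥ* P = 1) (n : ℕ) : 1 ᵥ* P ^ n = 1 := by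
  induction n with
  | zero => simp
  | succ n ih => rw [pow_succ, ← vecMul_vecMul, ih, h]

variable [Nonempty ι]

theorem exists_spread_pow_mulVec_le (P : Matrix ι ι ℝ) (hrow : P *ᵥ 1 = 1) (d : ℕ)
    (hd : ∀ L, d ≤ L → ∀ i j, 0 < (P ^ L) i j) :
    ∃ C > 0, ∃ q ∈ Set.Ioo (0 : ℝ) 1, ∀ L, d ≤ L → ∀ x : ι → ℝ,
      spread (P ^ L *ᵥ x) ≤ C * q ^ L * spread x := by
  -- Contract along blocks of length `e = d + 1 > 0`, writing `L = e * m + (d + r)`: the remaining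
  -- factor `P ^ (d + r)` is nonnegative, so it does not increase the spread.
  set e := d + 1
  set ε := univ.inf' univ_nonempty fun p : ι × ι => (P ^ e) p.1 p.2
  have hε : 0 < ε := (lt_inf'_iff _).2 fun p _ => hd e (by omega) p.1 p.2
  have hεle : ∀ i j, ε ≤ (P ^ e) i j := fun i j => inf'_le _ (mem_univ (i, j))
  set c : ℝ := 1 - Fintype.card ι * ε
  have hc0 : 0 ≤ c := by
    have hsum := congrFun (pow_mulVec_one_of_mulVec_one hrow e) (Classical.arbitrary ι)
    simp only [mulVec, dotProduct, Pi.one_apply, mul_one] at hsum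
    have := sum_le_sum fun j (_ : j ∈ univ) => hεle (Classical.arbitrary ι) j
    rw [hsum, sum_const, card_univ, nsmul_eq_mul] at this
    linarith
  have hc1 : c < 1 := by
    have : 0 < Fintype.card ι * ε := by positivity
    linarith
  have hcontract : ∀ m y, spread ((P ^ e) ^ m *ᵥ y) ≤ c ^ m * spread y := by
    intro m
    induction m with
    | zero => simp
    | succ m ih =>
      intro y
      rw [pow_succ' (P ^ e), ← mulVec_mulVec, pow_succ' c, mul_assoc]
      exact (spread_mulVec_le _ hεle (pow_mulVec_one_of_mulVec_one hrow e) _).trans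
        (mul_le_mul_of_nonneg_left (ih y) hc0)
  obtain ⟨C, hC, q, hq, hpow⟩ := exists_pow_div_le_mul_pow hc0 hc1 (Nat.succ_pos d)
  refine ⟨C * (q ^ d)⁻¹, by have := hq.1; positivity, q, hq, fun L hL x => ?_⟩
  have hsplit : P ^ L = (P ^ e) ^ ((L - d) / e) * P ^ (d + (L - d) % e) := by
    rw [← pow_mul, ← pow_add]
    congr 1
    have := Nat.div_add_mod (L - d) e
    omega
  have hnonneg : ∀ i j, 0 ≤ (P ^ (d + (L - d) % e)) i j := fun i j => (hd _ (by omega) i j).le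
  calc spread (P ^ L *ᵥ x)
      = spread ((P ^ e) ^ ((L - d) / e) *ᵥ (P ^ (d + (L - d) % e) *ᵥ x)) := by
        rw [hsplit, mulVec_mulVec]
    _ ≤ c ^ ((L - d) / e) * spread (P ^ (d + (L - d) % e) *ᵥ x) :=
        hcontract _ _
    _ ≤ c ^ ((L - d) / e) * spread x := by
        gcongr
        simpa using spread_mulVec_le _ hnonneg (pow_mulVec_one_of_mulVec_one hrow _) x
    _ ≤ C * q ^ (L - d) * spread x := by
        gcongr
        · exact spread_nonneg x
        · exact hpow (L - d)
    _ = C * (q ^ d)⁻¹ * q ^ L * spread x := by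
        rw [← pow_sub_mul_pow q hL]
        field_simp [hq.1.ne']

theorem exists_abs_one_sub_card_mul_pow_apply_le (P : Matrix ι ι ℝ) (hrow : P *ᵥ 1 = 1)
    (hcol : 1 ᵥ* P = 1) (d : ℕ) (hd : ∀ L, d ≤ L → ∀ i j, 0 < (P ^ L) i j) :
    ∃ C > 0, ∃ q ∈ Set.Ioo (0 : ℝ) 1, ∀ L, d ≤ L → ∀ i j,
      |1 - Fintype.card ι * (P ^ L) i j| ≤ C * q ^ L := by
  obtain ⟨C, hC, q, hq, hspread⟩ := exists_spread_pow_mulVec_le P hrow d hd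
  refine ⟨Fintype.card ι * C, by positivity, q, hq, fun L hL i j => ?_⟩
  have hcolsum : ∑ s, (P ^ L) s j = 1 := by
    simpa [vecMul, dotProduct] using congrFun (one_vecMul_pow_of_one_vecMul hcol L) j
  have hsingle : spread (Pi.single j 1 : ι → ℝ) ≤ 1 := by
    simpa using spread_le_of_forall_mem_Icc (x := (Pi.single j 1 : ι → ℝ)) (a := 0) (b := 1)
      fun t => by rcases eq_or_ne t j with rfl | h <;> simp [*]
  calc |1 - Fintype.card ι * (P ^ L) i j|
      = |Fintype.card ι * (P ^ L *ᵥ Pi.single j 1) i - ∑ s, (P ^ L *ᵥ Pi.single j 1) s| := by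
        simp only [mulVec_single_one, col_apply, hcolsum, abs_sub_comm]
    _ ≤ Fintype.card ι * spread (P ^ L *ᵥ Pi.single j 1) := abs_card_mul_sub_sum_le_spread _ i
    _ ≤ Fintype.card ι * (C * q ^ L * 1) := by
        gcongr
        exact (hspread L hL _).trans
          (mul_le_mul_of_nonneg_left hsingle (by have := hq.1; positivity))
    _ = Fintype.card ι * C * q ^ L := by ring

end Consensus

section BlockDiagonal

variable {ι : Type*} [Fintype ι] [DecidableEq ι] {n : ι → Type*} [∀ j, Fintype (n j)]
  [∀ j, DecidableEq (n j)]

lemma blockDiagonal'_inv {R : Type*} [CommRing R] (A : ∀ j, Matrix (n j) (n j) R)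
    (hA : ∀ j, IsUnit (A j).det) : (blockDiagonal' A)⁻¹ = blockDiagonal' fun j => (A j)⁻¹ := by
  apply inv_eq_right_inv
  rw [← blockDiagonal'_mul]
  simp only [mul_nonsing_inv _ (hA _)]
  exact blockDiagonal'_one

lemma blockDiagonal'_inv_sub_inv_smul {K : Type*} [Field K] (A : ∀ j, Matrix (n j) (n j) K)
    (hA : ∀ j, IsUnit (A j).det) (c : ι → K) (hc : ∀ j, c j ≠ 0) :
    (blockDiagonal' A)⁻¹ - (blockDiagonal' fun j => (c j)⁻¹ • A j)⁻¹
      = blockDiagonal' fun j => (1 - c j) • (A j)⁻¹ := by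
  have hsmul : ∀ j, IsUnit ((c j)⁻¹ • A j).det := fun j => by
    rw [det_smul]
    exact ((isUnit_iff_ne_zero.2 (inv_ne_zero (hc j))).pow _).mul (hA j)
  have hblock : ∀ j, ((c j)⁻¹ • A j)⁻¹ = c j • (A j)⁻¹ := fun j => inv_eq_left_inv <| by
    rw [smul_mul_smul_comm, mul_inv_cancel₀ (hc j), one_smul, nonsing_inv_mul _ (hA j)]
  rw [blockDiagonal'_inv A hA, blockDiagonal'_inv _ hsmul, ← blockDiagonal'_sub]
  simp only [hblock, Pi.sub_def, sub_smul, one_smul]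

lemma norm_blockDiagonal'_smul_le {𝕜 : Type*} [RCLike 𝕜] (a : ι → 𝕜)
    (A : ∀ j, Matrix (n j) (n j) 𝕜) :
    ‖blockDiagonal' fun j => a j • A j‖ ≤ ∑ j, ‖a j‖ * ‖blockDiagonal' (Pi.single j (A j))‖ := by
  have hsum : blockDiagonal' (fun j => a j • A j)
      = ∑ j, a j • blockDiagonal' (Pi.single j (A j)) := by
    rw [← univ_sum_single fun j => a j • A j]
    exact (map_sum (blockDiagonal'AddMonoidHom n n 𝕜) _ univ).trans
      (by simp [Pi.single_smul, blockDiagonal'_smul])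
  rw [hsum]
  exact (norm_sum_le _ _).trans (sum_le_sum fun j _ => norm_smul_le _ _)

end BlockDiagonal

lemma Function.Periodic.exists_pos_forall_le_nat {f : ℕ → ℝ} {T : ℕ} (hf : Function.Periodic f T)
    (hT : 0 < T) : ∃ C > 0, ∀ k, f k ≤ C :=
  ⟨max ((range T).sup' (nonempty_range_iff.2 hT.ne') f) 1, by positivity, fun k =>
    hf.map_mod_nat k ▸ le_max_of_le_left (le_sup' f (mem_range.2 (Nat.mod_lt k hT)))⟩

theorem statement18_general {N T : ℕ} (hT : 1 ≤ T) (nd : Fin N → ℕ)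
    (Rs : ∀ j : Fin N, ℕ → Matrix (Fin (nd j)) (Fin (nd j)) ℝ)
    (hRper : ∀ j k, Rs j (k + T) = Rs j k)
    (hRpd : ∀ j k, (Rs j k).PosDef)
    (𝓛 : Matrix (Fin N) (Fin N) ℝ)
    (hrow : ∀ i, ∑ j, 𝓛 i j = 1) (hcol : ∀ j, ∑ i, 𝓛 i j = 1)
    (d : ℕ) (hd : ∀ L, d ≤ L → ∀ i j, 0 < (𝓛 ^ L) i j)
    (R : ℕ → Matrix ((j : Fin N) × Fin (nd j)) ((j : Fin N) × Fin (nd j)) ℝ)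
    (hR : ∀ k, R k = Matrix.blockDiagonal' fun j => Rs j k)
    (Rtil : Fin N → ℕ → ℕ →
      Matrix ((j : Fin N) × Fin (nd j)) ((j : Fin N) × Fin (nd j)) ℝ)
    (hRtil : ∀ i L k, Rtil i L k =
      Matrix.blockDiagonal' fun j => ((N : ℝ) * (𝓛 ^ L) i j)⁻¹ • Rs j k) :
    ∃ M' : ℝ, 0 < M' ∧ ∃ q : ℝ, q ∈ Set.Ioo (0 : ℝ) 1 ∧
      ∀ (i : Fin N) (L k : ℕ), d ≤ L →
        ‖(R k)⁻¹ - (Rtil i L k)⁻¹‖ ≤ M' * q ^ L := by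
  cases isEmpty_or_nonempty (Fin N)
  · exact ⟨1, one_pos, 1 / 2, ⟨by norm_num, by norm_num⟩, fun i => isEmptyElim i⟩
  obtain ⟨C, hC, q, hq, hweight⟩ := exists_abs_one_sub_card_mul_pow_apply_le 𝓛
    (by ext i; simp [mulVec, dotProduct, hrow]) (by ext j; simp [vecMul, dotProduct, hcol]) d hd
  let G : ℕ → Fin N → Matrix _ _ ℝ := fun k j =>
    blockDiagonal' (Pi.single j (Rs j k)⁻¹ : ∀ j, Matrix (Fin (nd j)) (Fin (nd j)) ℝ)
  obtain ⟨B, hB, hbound⟩ := Function.Periodic.exists_pos_forall_le_nat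
    (f := fun k => ∑ j, ‖G k j‖) (fun k => by simp only [G, hRper]) hT
  refine ⟨C * B, by positivity, q, hq, fun i L k hL => ?_⟩
  have hweight_ne : ∀ j, (N : ℝ) * (𝓛 ^ L) i j ≠ 0 := fun j =>
    (mul_pos (Nat.cast_pos.2 i.pos) (hd L hL i j)).ne'
  have hdiff := blockDiagonal'_inv_sub_inv_smul (fun j => Rs j k)
    (fun j => (hRpd j k).det_pos.ne'.isUnit) _ hweight_ne
  rw [← hR, ← hRtil] at hdiff
  calc ‖(R k)⁻¹ - (Rtil i L k)⁻¹‖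
      ≤ ∑ j, ‖1 - (N : ℝ) * (𝓛 ^ L) i j‖ * ‖G k j‖ :=
        hdiff ▸ norm_blockDiagonal'_smul_le _ _
    _ ≤ ∑ j, C * q ^ L * ‖G k j‖ := by
        gcongr with j
        simpa using hweight L hL i j
    _ ≤ C * q ^ L * B := by
        rw [← mul_sum]
        exact mul_le_mul_of_nonneg_left (hbound k) (by have := hq.1; positivity)
    _ = C * B * q ^ L := by ring

/-- under the sensor-network assumptions, the inverse of the consensus-weighted
noise covariance `R̃_{i,k}^{(L)}` converges to `R_k⁻¹` exponentially in the fusion step `L`,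
uniformly in the sensor `i` and the time `k`. -/
theorem statement18 {N T : ℕ} (hT : 1 ≤ T) (nd : Fin N → ℕ)
    (Rs : ∀ j : Fin N, ℕ → Matrix (Fin (nd j)) (Fin (nd j)) ℝ)
    (hRper : ∀ j k, Rs j (k + T) = Rs j k)
    (hRpd : ∀ j k, (Rs j k).PosDef)
    (𝓛 : Matrix (Fin N) (Fin N) ℝ)
    (hnn : ∀ i j, 0 ≤ 𝓛 i j)
    (hrow : ∀ i, ∑ j, 𝓛 i j = 1) (hcol : ∀ j, ∑ i, 𝓛 i j = 1)
    (heig1 : ((𝓛.map (algebraMap ℝ ℂ)).charpoly).rootMultiplicity 1 = 1)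
    (heig : ∀ μ ∈ spectrum ℂ (𝓛.map (algebraMap ℝ ℂ)), μ ≠ 1 → ‖μ‖ < 1)
    (d : ℕ) (hd : ∀ L, d ≤ L → ∀ i j, 0 < (𝓛 ^ L) i j)
    (R : ℕ → Matrix ((j : Fin N) × Fin (nd j)) ((j : Fin N) × Fin (nd j)) ℝ)
    (hR : ∀ k, R k = Matrix.blockDiagonal' fun j => Rs j k)
    (Rtil : Fin N → ℕ → ℕ →
      Matrix ((j : Fin N) × Fin (nd j)) ((j : Fin N) × Fin (nd j)) ℝ)
    (hRtil : ∀ i L k, Rtil i L k =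
      Matrix.blockDiagonal' fun j => ((N : ℝ) * (𝓛 ^ L) i j)⁻¹ • Rs j k) :
    ∃ M' : ℝ, 0 < M' ∧ ∃ q : ℝ, q ∈ Set.Ioo (0 : ℝ) 1 ∧
      ∀ (i : Fin N) (L k : ℕ), d ≤ L →
        ‖(R k)⁻¹ - (Rtil i L k)⁻¹‖ ≤ M' * q ^ L :=
  statement18_general hT nd Rs hRper hRpd 𝓛 hrow hcol d hd R hR Rtil hRtil
end
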